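/- Let $\mathcal{R}$ be an algebraic Kähler curvature tensor on $\mathbb{C}^n$, $n \geq 3$, satisfying NQOBC and with vanishing scalar curvature. Then $\mathcal{R} = 0$. -/

import Mathlib

open Finset

noncomputable section

/-- An algebraic Kähler curvature tensor on `ℂⁿ`: complex linear in the first and
third (unbarred) slots, conjugate linear in the second and fourth (barred) slots,
with the pair symmetry `R(X,Ȳ,Z,W̄) = R(Z,W̄,X,Ȳ)`, the Kähler symmetry
`R(X,Ȳ,Z,W̄) = R(Z,Ȳ,X,W̄)`, and the reality condition
`conj R(X,Ȳ,Z,W̄) = R(Y,X̄,W,Z̄)`. -/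
structure AKCT (n : ℕ) where
  R : (Fin n → ℂ) → (Fin n → ℂ) → (Fin n → ℂ) → (Fin n → ℂ) → ℂ
  smul_fst : ∀ (a : ℂ) (X Y Z W), R (a • X) Y Z W = a * R X Y Z W
  add_fst : ∀ (X X' Y Z W), R (X + X') Y Z W = R X Y Z W + R X' Y Z W
  smul_snd : ∀ (a : ℂ) (X Y Z W), R X (a • Y) Z W = (starRingEnd ℂ) a * R X Y Z W
  add_snd : ∀ (X Y Y' Z W), R X (Y + Y') Z W = R X Y Z W + R X Y' Z W
  pair_symm : ∀ (X Y Z W), R X Y Z W = R Z W X Y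
  kahler_symm : ∀ (X Y Z W), R X Y Z W = R Z Y X W
  conj_symm : ∀ (X Y Z W), (starRingEnd ℂ) (R X Y Z W) = R Y X W Z

/-- The standard Hermitian inner product on `ℂⁿ` (conjugate linear in the first slot). -/
def hermInner {n : ℕ} (v w : Fin n → ℂ) : ℂ := ∑ k, (starRingEnd ℂ) (v k) * w k

/-- A unitary frame of `ℂⁿ`. -/
def UnitaryFrame {n : ℕ} (e : Fin n → Fin n → ℂ) : Prop :=
  ∀ i j, hermInner (e i) (e j) = if i = j then 1 else 0

/-- An orthonormal (unitary) pair of vectors in `ℂⁿ`. -/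
def OrthPair {n : ℕ} (V W : Fin n → ℂ) : Prop :=
  hermInner V V = 1 ∧ hermInner W W = 1 ∧ hermInner V W = 0

/-- Nonnegative quadratic orthogonal bisectional curvature. -/
def NQOBC {n : ℕ} (𝓡 : AKCT n) : Prop :=
  ∀ e : Fin n → Fin n → ℂ, UnitaryFrame e →
    ∀ ξ : Fin n → ℝ,
      0 ≤ ∑ i, ∑ j, (𝓡.R (e i) (e i) (e j) (e j)).re * (ξ i - ξ j) ^ 2

/-- The `k`-th standard basis vector of `ℂⁿ`. -/
def stdVec {n : ℕ} (k : Fin n) : Fin n → ℂ := fun m => if m = k then 1 else 0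

/-- The scalar curvature of an algebraic Kähler curvature tensor
(computed in the standard basis). -/
def scalarCurv {n : ℕ} (𝓡 : AKCT n) : ℝ :=
  ∑ i, ∑ j, (𝓡.R (stdVec i) (stdVec i) (stdVec j) (stdVec j)).re

end

/-!
Fix a unitary frame `e` and put `t p = Ric(e p)`, `B p q = R(e p, ē p, e q, ē q)`. NQOBC with `ξ`
a coordinate vector gives `B p p ≤ t p`. Applied to frames containing the rotated pairs
`(e p ± a e q) / √2`, `a ∈ {1, i}`, and averaged over `a`, it gives `2 B p q ≤ t p + t q`, because
the holomorphic sectional curvatures of the rotated vectors cancel by polarization. The rows of `B`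
sum to `t` and `∑ t = S = 0`, so the nonnegative numbers `t p + t q - 2 B p q` sum to zero; hence
`2 B p q = t p + t q`, and summing over `q` gives `(n - 2) t p = 0`. For `n ≥ 3` all `B p q`
vanish. Every unit vector lies in a unitary frame, so the holomorphic sectional curvature
vanishes, and polarization gives `R = 0`.
-/

namespace AKCT

variable {n : ℕ} (T : AKCT n)

lemma smul_trd (a : ℂ) (X Y Z W) : T.R X Y (a • Z) W = a * T.R X Y Z W := by
  rw [T.kahler_symm, T.smul_fst, T.kahler_symm]

lemma add_trd (X Y Z Z' W) : T.R X Y (Z + Z') W = T.R X Y Z W + T.R X Y Z' W := by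
  rw [T.kahler_symm, T.add_fst, T.kahler_symm Z, T.kahler_symm Z']

lemma smul_fth (a : ℂ) (X Y Z W) : T.R X Y Z (a • W) = (starRingEnd ℂ) a * T.R X Y Z W := by
  rw [T.pair_symm, T.smul_snd, T.pair_symm]

lemma add_fth (X Y Z W W') : T.R X Y Z (W + W') = T.R X Y Z W + T.R X Y Z W' := by
  rw [T.pair_symm, T.add_snd, T.pair_symm Z W, T.pair_symm Z W']

lemma sum_fst {ι : Type*} (s : Finset ι) (f : ι → Fin n → ℂ) (Y Z W) :
    T.R (∑ x ∈ s, f x) Y Z W = ∑ x ∈ s, T.R (f x) Y Z W :=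
  map_sum (AddMonoidHom.mk' (fun X => T.R X Y Z W) fun X X' => T.add_fst X X' Y Z W) f s

lemma sum_snd {ι : Type*} (s : Finset ι) (f : ι → Fin n → ℂ) (X Z W) :
    T.R X (∑ x ∈ s, f x) Z W = ∑ x ∈ s, T.R X (f x) Z W :=
  map_sum (AddMonoidHom.mk' (fun Y => T.R X Y Z W) fun Y Y' => T.add_snd X Y Y' Z W) f s

/-- `R(u, ū, v, v̄)`; it is real by `conj_symm`. -/
def bisec (u v : Fin n → ℂ) : ℝ := (T.R u u v v).re

lemma ofReal_bisec (u v : Fin n → ℂ) : (T.bisec u v : ℂ) = T.R u u v v := by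
  apply Complex.conj_eq_iff_re.mp
  exact T.conj_symm u u v v

lemma bisec_comm (u v : Fin n → ℂ) : T.bisec u v = T.bisec v u := by
  rw [bisec, T.pair_symm, bisec]

def ricci (v : Fin n → ℂ) : ℝ := ∑ b, T.bisec v (stdVec b)

lemma bisec_ofReal_smul_smul (r : ℝ) (u v : Fin n → ℂ) :
    T.bisec ((r : ℂ) • u) ((r : ℂ) • v) = r ^ 4 * T.bisec u v := by
  apply Complex.ofReal_injective
  push_cast
  simp only [ofReal_bisec, T.smul_fst, T.smul_snd, T.smul_trd, T.smul_fth, Complex.conj_ofReal]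
  ring

lemma ricci_ofReal_smul (r : ℝ) (u : Fin n → ℂ) :
    T.ricci ((r : ℂ) • u) = r ^ 2 * T.ricci u := by
  simp only [ricci, bisec, T.smul_fst, T.smul_snd, Complex.conj_ofReal, Finset.mul_sum]
  refine Finset.sum_congr rfl fun b _ => ?_
  rw [← mul_assoc, ← Complex.ofReal_mul, Complex.re_ofReal_mul, sq]

lemma bisec_add_smul_add_bisec_sub_smul {a : ℂ} (ha : (starRingEnd ℂ) a * a = 1)
    (u v w : Fin n → ℂ) :
    T.bisec (u + a • v) w + T.bisec (u - a • v) w = 2 * T.bisec u w + 2 * T.bisec v w := by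
  apply Complex.ofReal_injective
  push_cast
  simp only [ofReal_bisec, sub_eq_add_neg, ← neg_smul, T.add_fst, T.add_snd, T.smul_fst,
    T.smul_snd, map_neg]
  linear_combination 2 * T.R v v w w * ha

lemma ricci_add_smul_add_ricci_sub_smul {a : ℂ} (ha : (starRingEnd ℂ) a * a = 1)
    (u v : Fin n → ℂ) :
    T.ricci (u + a • v) + T.ricci (u - a • v) = 2 * T.ricci u + 2 * T.ricci v := by
  simp only [ricci, ← Finset.sum_add_distrib, Finset.mul_sum,
    T.bisec_add_smul_add_bisec_sub_smul ha]

lemma bisec_self_polarization (u v : Fin n → ℂ) :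
    T.bisec (u + v) (u + v) + T.bisec (u - v) (u - v)
      + T.bisec (u + Complex.I • v) (u + Complex.I • v)
      + T.bisec (u - Complex.I • v) (u - Complex.I • v)
      = 4 * T.bisec u u + 4 * T.bisec v v + 16 * T.bisec u v := by
  apply Complex.ofReal_injective
  push_cast
  simp only [ofReal_bisec, sub_eq_add_neg, ← neg_smul, ← neg_one_smul ℂ v, T.add_fst, T.add_snd,
    T.add_trd, T.add_fth, T.smul_fst, T.smul_snd, T.smul_trd, T.smul_fth, map_neg, map_one,
    Complex.conj_I]
  ring_nf
  simp only [Complex.I_sq, Complex.I_pow_four]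
  linear_combination 4 * T.kahler_symm u v v u + 4 * T.kahler_symm v u u v
    + 8 * T.pair_symm v v u u

lemma bisec_add_sub_polarization (u v : Fin n → ℂ) :
    T.bisec (u + v) (u - v) + T.bisec (u + Complex.I • v) (u - Complex.I • v)
      = 2 * T.bisec u u + 2 * T.bisec v v := by
  apply Complex.ofReal_injective
  push_cast
  simp only [ofReal_bisec, sub_eq_add_neg, ← neg_smul, ← neg_one_smul ℂ v, T.add_fst, T.add_snd,
    T.add_trd, T.add_fth, T.smul_fst, T.smul_snd, T.smul_trd, T.smul_fth, map_neg, map_one,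
    Complex.conj_I]
  ring_nf
  simp only [Complex.I_sq, Complex.I_pow_three, Complex.I_pow_four]
  linear_combination (-1 + Complex.I) * T.pair_symm u u u v
    + (-1 - Complex.I) * T.kahler_symm u u v u + (1 - Complex.I) * T.pair_symm u v v v
    + (1 + Complex.I) * T.pair_symm v u v v - 2 * T.kahler_symm u v v u
    - 2 * T.kahler_symm v u u v

end AKCT

section Frames

variable {n : ℕ} {e : Fin n → Fin n → ℂ}

lemma hermInner_eq_inner (v w : Fin n → ℂ) :
    hermInner v w = inner ℂ (WithLp.toLp 2 v) (WithLp.toLp 2 w) := by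
  rw [EuclideanSpace.inner_toLp_toLp, dotProduct, hermInner]
  exact Finset.sum_congr rfl fun k _ => mul_comm _ _

lemma hermInner_conj_symm (v w : Fin n → ℂ) :
    (starRingEnd ℂ) (hermInner w v) = hermInner v w := by
  rw [hermInner_eq_inner, hermInner_eq_inner, inner_conj_symm]

lemma OrthPair.rotate {u v : Fin n → ℂ} (huv : OrthPair u v) {a : ℂ}
    (ha : (starRingEnd ℂ) a * a = 1) {r : ℝ} (hr : r ^ 2 = 1 / 2) :
    OrthPair ((r : ℂ) • (u + a • v)) ((r : ℂ) • (u - a • v)) := by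
  obtain ⟨huu, hvv, huv⟩ := huv
  have hvu : hermInner v u = 0 := by rw [← hermInner_conj_symm, huv, map_zero]
  have hr' : (r : ℂ) * r = 1 / 2 := by rw [← sq, ← Complex.ofReal_pow, hr]; norm_num
  rw [hermInner_eq_inner] at huu hvv huv hvu
  refine ⟨?_, ?_, ?_⟩ <;>
    simp only [hermInner_eq_inner, WithLp.toLp_smul, WithLp.toLp_add, WithLp.toLp_sub,
      inner_smul_left, inner_smul_right, inner_add_left, inner_add_right, inner_sub_left,
      inner_sub_right, huu, hvv, huv, hvu, Complex.conj_ofReal]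
  · linear_combination (1 + (starRingEnd ℂ) a * a) * hr' + 1 / 2 * ha
  · linear_combination (1 + (starRingEnd ℂ) a * a) * hr' + 1 / 2 * ha
  · linear_combination (1 - (starRingEnd ℂ) a * a) * hr' - 1 / 2 * ha

lemma exists_unitaryFrame_extension {s : Set (Fin n)} {v : Fin n → Fin n → ℂ}
    (hv : ∀ i ∈ s, ∀ j ∈ s, hermInner (v i) (v j) = if i = j then 1 else 0) :
    ∃ e, UnitaryFrame e ∧ ∀ i ∈ s, e i = v i := by
  have hcard : Module.finrank ℂ (EuclideanSpace ℂ (Fin n)) = Fintype.card (Fin n) := by simp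
  have hs : Orthonormal ℂ (s.domRestrict fun i => WithLp.toLp 2 (v i)) := by
    rw [orthonormal_iff_ite]
    rintro ⟨i, hi⟩ ⟨j, hj⟩
    simpa [← hermInner_eq_inner] using hv i hi j hj
  obtain ⟨b, hb⟩ := hs.exists_orthonormalBasis_extension_of_card_eq hcard
  refine ⟨fun i => (b i).ofLp, fun i j => ?_, fun i hi => by simp [hb i hi]⟩
  rw [hermInner_eq_inner]
  exact orthonormal_iff_ite.mp b.orthonormal i j

lemma UnitaryFrame.orthPair (he : UnitaryFrame e) {p q : Fin n} (hpq : p ≠ q) :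
    OrthPair (e p) (e q) :=
  ⟨by simpa using he p p, by simpa using he q q, by simpa [hpq] using he p q⟩

lemma UnitaryFrame.sum_conj_mul (he : UnitaryFrame e) (a b : Fin n) :
    ∑ i, (starRingEnd ℂ) (e i a) * e i b = if a = b then 1 else 0 := by
  have hrows : Matrix.of e * (Matrix.of e).conjTranspose = 1 := by
    ext i j
    have hij : (Matrix.of e * (Matrix.of e).conjTranspose) i j
        = (starRingEnd ℂ) (hermInner (e i) (e j)) := by
      simp [Matrix.mul_apply, hermInner, mul_comm]
    rw [hij, he i j, Matrix.one_apply]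
    split_ifs <;> simp
  simpa [Matrix.mul_apply, Matrix.one_apply] using
    congrArg (fun M => M a b) (mul_eq_one_comm.mp hrows)

lemma eq_sum_smul_stdVec (v : Fin n → ℂ) : v = ∑ a, v a • stdVec a := by
  ext m
  simp [stdVec]

end Frames

namespace AKCT

variable {n : ℕ} (T : AKCT n) {e : Fin n → Fin n → ℂ}

lemma R_self_eq_sum_stdVec (v Z W : Fin n → ℂ) :
    T.R v v Z W = ∑ a, ∑ b, v a * (starRingEnd ℂ) (v b) * T.R (stdVec a) (stdVec b) Z W := by
  have hv : T.R v v Z W = T.R (∑ a, v a • stdVec a) (∑ b, v b • stdVec b) Z W := by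
    rw [← eq_sum_smul_stdVec]
  rw [hv, T.sum_fst]
  refine Finset.sum_congr rfl fun a _ => ?_
  rw [T.smul_fst, T.sum_snd, Finset.mul_sum]
  refine Finset.sum_congr rfl fun b _ => ?_
  rw [T.smul_snd]; ring

lemma sum_R_frame (he : UnitaryFrame e) (Z W : Fin n → ℂ) :
    ∑ i, T.R (e i) (e i) Z W = ∑ a, T.R (stdVec a) (stdVec a) Z W := by
  rw [Finset.sum_congr rfl fun i _ => T.R_self_eq_sum_stdVec (e i) Z W, Finset.sum_comm]
  refine Finset.sum_congr rfl fun a _ => ?_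
  rw [Finset.sum_comm]
  simp_rw [← Finset.sum_mul, mul_comm (e _ a), he.sum_conj_mul, ite_mul, one_mul, zero_mul]
  simp

lemma sum_bisec_frame_left (he : UnitaryFrame e) (v : Fin n → ℂ) :
    ∑ p, T.bisec (e p) v = T.ricci v := by
  simp_rw [ricci, T.bisec_comm v, bisec, ← Complex.re_sum, T.sum_R_frame he]

lemma sum_bisec_frame_right (he : UnitaryFrame e) (v : Fin n → ℂ) :
    ∑ q, T.bisec v (e q) = T.ricci v := by
  simp_rw [T.bisec_comm v, T.sum_bisec_frame_left he]

lemma sum_ricci_frame (he : UnitaryFrame e) : ∑ p, T.ricci (e p) = scalarCurv T := by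
  unfold ricci
  rw [Finset.sum_comm]
  simp_rw [T.sum_bisec_frame_left he]
  rfl

end AKCT

lemma sum_sum_mul_sub_sq {ι : Type*} [Fintype ι] (r : ι → ι → ℝ) (ξ : ι → ℝ) :
    ∑ p, ∑ q, r p q * (ξ p - ξ q) ^ 2
      = ∑ p, ξ p ^ 2 * ∑ q, r p q + ∑ q, ξ q ^ 2 * ∑ p, r p q
        - 2 * ∑ p, ∑ q, ξ p * ξ q * r p q := by
  have hexp : ∀ p q, r p q * (ξ p - ξ q) ^ 2
      = ξ p ^ 2 * r p q + ξ q ^ 2 * r p q - 2 * (ξ p * ξ q * r p q) := fun p q => by ring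
  simp_rw [hexp, Finset.sum_sub_distrib, Finset.sum_add_distrib, Finset.mul_sum]
  rw [Finset.sum_comm (f := fun p q => ξ q ^ 2 * r p q)]

lemma eq_zero_of_two_mul_le_add {ι : Type*} [Fintype ι] (hcard : 3 ≤ Fintype.card ι)
    {t : ι → ℝ} {B : ι → ι → ℝ} (hrow : ∀ p, ∑ q, B p q = t p) (htot : ∑ p, t p = 0)
    (hle : ∀ p q, 2 * B p q ≤ t p + t q) (p q : ι) : B p q = 0 := by
  have hsum : ∑ p, ∑ q, (t p + t q - 2 * B p q) = 0 := by
    simp [Finset.sum_add_distrib, Finset.sum_sub_distrib, ← Finset.mul_sum, hrow, htot]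
  have heq : ∀ p q, 2 * B p q = t p + t q := by
    intro p q
    have hnonneg : ∀ p q, 0 ≤ t p + t q - 2 * B p q := fun p q => by linarith [hle p q]
    have := (Finset.sum_eq_zero_iff_of_nonneg fun p _ => Finset.sum_nonneg fun q _ =>
      hnonneg p q).mp hsum p (Finset.mem_univ p)
    have := (Finset.sum_eq_zero_iff_of_nonneg fun q _ => hnonneg p q).mp this q
      (Finset.mem_univ q)
    linarith
  have ht : ∀ p, t p = 0 := by
    intro p
    have hcount : 2 * t p = Fintype.card ι * t p :=
      calc 2 * t p = ∑ q, 2 * B p q := by rw [← Finset.mul_sum, hrow]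
        _ = ∑ q, (t p + t q) := by simp_rw [heq]
        _ = Fintype.card ι * t p := by simp [Finset.sum_add_distrib, htot]
    have : (3 : ℝ) ≤ Fintype.card ι := by exact_mod_cast hcard
    nlinarith
  linarith [heq p q, ht p, ht q]

lemma eq_zero_of_sesq_self_eq_zero {M : Type*} [AddCommGroup M] [Module ℂ M] {f : M → M → ℂ}
    (add_left : ∀ x y z, f (x + y) z = f x z + f y z)
    (add_right : ∀ x y z, f x (y + z) = f x y + f x z)
    (smul_left : ∀ (c : ℂ) x y, f (c • x) y = c * f x y)
    (smul_right : ∀ (c : ℂ) x y, f x (c • y) = (starRingEnd ℂ) c * f x y)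
    (hself : ∀ x, f x x = 0) (x y : M) : f x y = 0 := by
  have h1 := hself (x + y)
  have hI := hself (x + Complex.I • y)
  simp only [add_left, add_right, smul_left, smul_right, hself, Complex.conj_I] at h1 hI
  linear_combination (1 / 2 : ℂ) * h1 + (Complex.I / 2) * hI
    + (f x y - f y x) / 2 * Complex.I_mul_I

section NQOBC

variable {n : ℕ} {T : AKCT n} {e : Fin n → Fin n → ℂ}

lemma NQOBC.sum_mul_bisec_le (h : NQOBC T) (he : UnitaryFrame e) (ξ : Fin n → ℝ) :
    ∑ p, ∑ q, ξ p * ξ q * T.bisec (e p) (e q) ≤ ∑ p, ξ p ^ 2 * T.ricci (e p) := by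
  have hQ : 0 ≤ ∑ p, ∑ q, T.bisec (e p) (e q) * (ξ p - ξ q) ^ 2 := h e he ξ
  simp_rw [sum_sum_mul_sub_sq, T.sum_bisec_frame_right he, T.sum_bisec_frame_left he] at hQ
  linarith

lemma NQOBC.bisec_self_le_ricci (h : NQOBC T) (he : UnitaryFrame e) (k : Fin n) :
    T.bisec (e k) (e k) ≤ T.ricci (e k) := by
  simpa using h.sum_mul_bisec_le he (fun m => if m = k then 1 else 0)

lemma NQOBC.bisec_self_add_bisec_self_le (h : NQOBC T) (he : UnitaryFrame e) {i j : Fin n}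
    (hij : i ≠ j) :
    T.bisec (e i) (e i) + T.bisec (e j) (e j)
      ≤ T.ricci (e i) + T.ricci (e j) + 2 * T.bisec (e i) (e j) := by
  have := h.sum_mul_bisec_le he (fun m => if m = i then 1 else if m = j then -1 else 0)
  rw [Fintype.sum_eq_add i j hij, Fintype.sum_eq_add i j hij, Fintype.sum_eq_add i j hij,
    Fintype.sum_eq_add i j hij] at this
  · simp only [if_pos, if_neg hij.symm] at this
    linarith [T.bisec_comm (e i) (e j)]
  all_goals rintro m ⟨hi, hj⟩; simp [hi, hj]

lemma NQOBC.bisec_self_add_bisec_self_le_of_orthPair (h : NQOBC T) (hn : 2 ≤ n)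
    {u v : Fin n → ℂ} (huv : OrthPair u v) :
    T.bisec u u + T.bisec v v ≤ T.ricci u + T.ricci v + 2 * T.bisec u v := by
  let i : Fin n := ⟨0, by omega⟩
  let j : Fin n := ⟨1, by omega⟩
  have hij : i ≠ j := by simp [i, j, Fin.ext_iff]
  have hvu : hermInner v u = 0 := by rw [← hermInner_conj_symm, huv.2.2, map_zero]
  obtain ⟨e, he, hext⟩ := exists_unitaryFrame_extension (s := {i, j})
    (v := fun m => if m = i then u else v) (by
      rintro a (rfl | rfl) b (rfl | rfl) <;> simp [hij, hij.symm, huv.1, huv.2.1, huv.2.2, hvu])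
  have := h.bisec_self_add_bisec_self_le he hij
  rwa [hext i (by simp), hext j (by simp), if_pos rfl, if_neg hij.symm] at this

lemma NQOBC.two_mul_bisec_le (h : NQOBC T) (hn : 2 ≤ n) {u v : Fin n → ℂ}
    (huv : OrthPair u v) : 2 * T.bisec u v ≤ T.ricci u + T.ricci v := by
  have hr : ((√2)⁻¹ : ℝ) ^ 2 = 1 / 2 := by rw [inv_pow, Real.sq_sqrt zero_le_two, one_div]
  have hrot : ∀ a : ℂ, (starRingEnd ℂ) a * a = 1 →
      T.bisec (u + a • v) (u + a • v) + T.bisec (u - a • v) (u - a • v)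
        ≤ 4 * (T.ricci u + T.ricci v) + 2 * T.bisec (u + a • v) (u - a • v) := by
    intro a ha
    have := h.bisec_self_add_bisec_self_le_of_orthPair hn (huv.rotate ha hr)
    simp only [AKCT.bisec_ofReal_smul_smul, AKCT.ricci_ofReal_smul,
      show ((√2)⁻¹ : ℝ) ^ 4 = (((√2)⁻¹ : ℝ) ^ 2) ^ 2 by ring, hr] at this
    linarith [T.ricci_add_smul_add_ricci_sub_smul ha u v]
  have h1 := hrot 1 (by simp)
  have hI := hrot Complex.I (by simp)
  rw [one_smul] at h1
  linarith [T.bisec_self_polarization u v, T.bisec_add_sub_polarization u v]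

lemma NQOBC.two_mul_bisec_frame_le (h : NQOBC T) (hn : 2 ≤ n) (he : UnitaryFrame e)
    (p q : Fin n) :
    2 * T.bisec (e p) (e q) ≤ T.ricci (e p) + T.ricci (e q) := by
  rcases eq_or_ne p q with rfl | hpq
  · linarith [h.bisec_self_le_ricci he p]
  · exact h.two_mul_bisec_le hn (he.orthPair hpq)

lemma NQOBC.bisec_frame_eq_zero (h : NQOBC T) (hn : 3 ≤ n) (hS : scalarCurv T = 0)
    (he : UnitaryFrame e) (p q : Fin n) :
    T.bisec (e p) (e q) = 0 :=
  eq_zero_of_two_mul_le_add (by simpa using hn) (T.sum_bisec_frame_right he <| e ·)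
    ((T.sum_ricci_frame he).trans hS) (h.two_mul_bisec_frame_le (by omega) he) p q

lemma NQOBC.bisec_self_eq_zero (h : NQOBC T) (hn : 3 ≤ n) (hS : scalarCurv T = 0)
    (X : Fin n → ℂ) : T.bisec X X = 0 := by
  by_cases hX : X = 0
  · simpa [hX] using T.bisec_ofReal_smul_smul 0 0 0
  set x := WithLp.toLp 2 X
  have hx : x ≠ 0 := by simpa [x] using hX
  set u := ((‖x‖⁻¹ : ℝ) : ℂ) • X
  have hu : hermInner u u = 1 := by
    rw [hermInner_eq_inner, inner_self_eq_norm_sq_to_K, WithLp.toLp_smul, norm_smul,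
      Complex.norm_real, norm_inv, norm_norm, inv_mul_cancel₀ (norm_ne_zero_iff.mpr hx)]
    norm_num
  let k : Fin n := ⟨0, by omega⟩
  obtain ⟨e, he, hek⟩ := exists_unitaryFrame_extension (s := {k}) (v := fun _ => u)
    (by rintro a rfl b rfl; simpa using hu)
  have hXu : X = ((‖x‖ : ℝ) : ℂ) • u := by
    rw [smul_smul, ← Complex.ofReal_mul, mul_inv_cancel₀ (norm_ne_zero_iff.mpr hx),
      Complex.ofReal_one, one_smul]
  rw [hXu, T.bisec_ofReal_smul_smul, ← hek k rfl, h.bisec_frame_eq_zero hn hS he, mul_zero]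

end NQOBC

lemma AKCT.eq_zero_of_bisec_self_eq_zero {n : ℕ} (T : AKCT n) (hH : ∀ X, T.bisec X X = 0)
    (X Y Z W : Fin n → ℂ) : T.R X Y Z W = 0 := by
  have hB : ∀ X Z, T.R X X Z Z = 0 := by
    intro X Z
    have := T.bisec_self_polarization X Z
    simp only [hH] at this
    rw [← T.ofReal_bisec, show T.bisec X Z = 0 by linarith, Complex.ofReal_zero]
  have hXYZZ : ∀ X Y Z, T.R X Y Z Z = 0 := fun X Y Z =>
    eq_zero_of_sesq_self_eq_zero (f := fun X Y => T.R X Y Z Z)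
      (fun _ _ _ => T.add_fst _ _ _ _ _) (fun _ _ _ => T.add_snd _ _ _ _ _)
      (fun _ _ _ => T.smul_fst _ _ _ _ _) (fun _ _ _ => T.smul_snd _ _ _ _ _) (hB · Z) X Y
  exact eq_zero_of_sesq_self_eq_zero (f := fun Z W => T.R X Y Z W)
    (fun _ _ _ => T.add_trd _ _ _ _ _) (fun _ _ _ => T.add_fth _ _ _ _ _)
    (fun _ _ _ => T.smul_trd _ _ _ _ _) (fun _ _ _ => T.smul_fth _ _ _ _ _) (hXYZZ X Y) Z W

/-- Theorem 3.1, `n ≥ 3`: NQOBC together with vanishing scalar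
curvature implies the curvature tensor vanishes identically. -/
theorem stmt13 (n : ℕ) (hn : 3 ≤ n) (𝓡 : AKCT n) (h : NQOBC 𝓡)
    (hS : scalarCurv 𝓡 = 0) :
    ∀ X Y Z W : Fin n → ℂ, 𝓡.R X Y Z W = 0 :=
  𝓡.eq_zero_of_bisec_self_eq_zero (h.bisec_self_eq_zero hn hS)
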